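/- arXiv:2308.09301 — 2 statements merged into one kernel-verified Lean document; each statement's English description precedes it below -/
import Mathlib

section
/- Let (S, E, T) be a closed and consistent observation table over input alphabet Σ and output alphabet O, and let (Q̂, q̂0, δ̂, L̂) be its hypothesis Moore machine. Then any two distinct states of the hypothesis machine are distinguished by a suffix in E: for all s1, s2 ∈ S with row(s1) ≠ row(s2), there exists e ∈ E such that L̂(δ̂*(row(s1), e)) ≠ L̂(δ̂*(row(s2), e)). -/
/-! By induction on `e`, using that `E` is suffix-closed, the hypothesis machine started in
`row(s)` outputs `T(s·e)` after reading `e ∈ E`. Hence two rows that differ at some `e ∈ E`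
are separated by that very `e`. -/

/-- A Moore machine over input alphabet `σ` and output alphabet `O`, with state type `Q`:
initial state `q0`, transition function `δ`, and output labeling `L`. -/
structure MooreMachine (σ O Q : Type*) where
  q0 : Q
  δ : Q → σ → Q
  L : Q → O

/-- `M.run q w` is the extended transition function `δ*(q, w)`, the left fold of `δ` over `w`. -/
def MooreMachine.run {σ O Q : Type*} (M : MooreMachine σ O Q) (q : Q) (w : List σ) : Q :=
  w.foldl M.δ q

/-- An observation table `(S, E, T)`: finite sets of prefixes `S` (prefix-closed, containing ε)
and suffixes `E` (suffix-closed, containing ε), and an entry function `T`. -/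
structure ObsTable (σ O : Type*) where
  S : Finset (List σ)
  E : Finset (List σ)
  T : List σ → O
  nil_mem_S : [] ∈ S
  prefixClosed : ∀ s ∈ S, ∀ t : List σ, t <+: s → t ∈ S
  nil_mem_E : [] ∈ E
  suffixClosed : ∀ e ∈ E, ∀ t : List σ, t <:+ e → t ∈ E

/-- `row(s) : E → O`, given by `row(s)(e) = T(s·e)`. -/
def ObsTable.row {σ O : Type*} (Ot : ObsTable σ O) (s : List σ) : {e // e ∈ Ot.E} → O :=
  fun e => Ot.T (s ++ e.1)

/-- The table is closed if every `row(s·σ)` with `s ∈ S` coincides with `row(s')` for some `s' ∈ S`. -/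
def ObsTable.Closed {σ O : Type*} (Ot : ObsTable σ O) : Prop :=
  ∀ s ∈ Ot.S, ∀ a : σ, ∃ s' ∈ Ot.S, Ot.row (s ++ [a]) = Ot.row s'

/-- The table is consistent if equal rows of elements of `S` have equal one-step extensions. -/
def ObsTable.Consistent {σ O : Type*} (Ot : ObsTable σ O) : Prop :=
  ∀ s₁ ∈ Ot.S, ∀ s₂ ∈ Ot.S,
    Ot.row s₁ = Ot.row s₂ → ∀ a : σ, Ot.row (s₁ ++ [a]) = Ot.row (s₂ ++ [a])

/-- `s ∈ S ∪ {t·σ : t ∈ S, σ ∈ Σ}`, the rows of the observation table. -/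
def ObsTable.InTableRows {σ O : Type*} (Ot : ObsTable σ O) (s : List σ) : Prop :=
  s ∈ Ot.S ∨ ∃ t ∈ Ot.S, ∃ a : σ, s = t ++ [a]

/-- The state set of the hypothesis machine: `Q̂ = {row(s) : s ∈ S}`. -/
def ObsTable.HQ {σ O : Type*} (Ot : ObsTable σ O) : Type _ :=
  {f : {e // e ∈ Ot.E} → O // ∃ s ∈ Ot.S, Ot.row s = f}

/-- The hypothesis state `row(s)` for `s ∈ S`. -/
def ObsTable.stateOf {σ O : Type*} (Ot : ObsTable σ O) (s : List σ) (hs : s ∈ Ot.S) : Ot.HQ :=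
  ⟨Ot.row s, s, hs, rfl⟩

/-- `M` is the hypothesis Moore machine of the table: its initial state is `row(ε)`,
its transitions satisfy `δ̂(row(s), σ) = row(s·σ)` for `s ∈ S`, and its outputs satisfy
`L̂(row(s)) = row(s)(ε) = T(s)` for `s ∈ S`. -/
def ObsTable.IsHypothesis {σ O : Type*} (Ot : ObsTable σ O)
    (M : MooreMachine σ O Ot.HQ) : Prop :=
  M.q0 = Ot.stateOf [] Ot.nil_mem_S ∧
  (∀ s, ∀ hs : s ∈ Ot.S, ∀ a : σ, (M.δ (Ot.stateOf s hs) a).1 = Ot.row (s ++ [a])) ∧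
  (∀ s, ∀ hs : s ∈ Ot.S, M.L (Ot.stateOf s hs) = Ot.T s)

/-- The number of states of the hypothesis machine: the number of distinct rows `row(s)`, `s ∈ S`. -/
def ObsTable.numStates {σ O : Type*} [DecidableEq O] (Ot : ObsTable σ O) : ℕ :=
  (Ot.S.image Ot.row).card

/-- A Moore machine is consistent with the table if `L(δ*(q0, s·e)) = T(s·e)` for every
`s ∈ S ∪ S·Σ` and every `e ∈ E`. -/
def MooreMachine.ConsistentWith {σ O Q : Type*} (M : MooreMachine σ O Q)
    (Ot : ObsTable σ O) : Prop :=
  ∀ s : List σ, Ot.InTableRows s → ∀ e ∈ Ot.E, M.L (M.run M.q0 (s ++ e)) = Ot.T (s ++ e)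

/-- `M` computes `f : Σ* → O` if `f(w) = L(δ*(q0, w))` for all `w`. -/
def MooreMachine.Computes {σ O Q : Type*} (M : MooreMachine σ O Q) (f : List σ → O) : Prop :=
  ∀ w : List σ, f w = M.L (M.run M.q0 w)

/-- `φ` is an isomorphism of Moore machines: a bijection on states preserving the initial
state, the transitions, and the output labeling. -/
def MooreIso {σ O Q₁ Q₂ : Type*} (M₁ : MooreMachine σ O Q₁) (M₂ : MooreMachine σ O Q₂)
    (φ : Q₁ → Q₂) : Prop :=
  Function.Bijective φ ∧ φ M₁.q0 = M₂.q0 ∧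
    (∀ q a, φ (M₁.δ q a) = M₂.δ (φ q) a) ∧ ∀ q, M₂.L (φ q) = M₁.L q

namespace ObsTable.IsHypothesis

variable {σ O : Type*} {Ot : ObsTable σ O} {M : MooreMachine σ O Ot.HQ}

-- The witness `s'` comes from the type `Q̂` of the successor state itself.
theorem exists_δ_stateOf_eq (hM : Ot.IsHypothesis M) (s : List σ) (hs : s ∈ Ot.S) (a : σ) :
    ∃ s', ∃ hs' : s' ∈ Ot.S,
      M.δ (Ot.stateOf s hs) a = Ot.stateOf s' hs' ∧ Ot.row s' = Ot.row (s ++ [a]) := by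
  obtain ⟨s', hs', hrow⟩ := (M.δ (Ot.stateOf s hs) a).2
  exact ⟨s', hs', Subtype.ext hrow.symm, hrow.trans (hM.2.1 s hs a)⟩

theorem L_run_stateOf (hM : Ot.IsHypothesis M) {e : List σ} (he : e ∈ Ot.E)
    (s : List σ) (hs : s ∈ Ot.S) : M.L (M.run (Ot.stateOf s hs) e) = Ot.T (s ++ e) := by
  induction e generalizing s with
  | nil => simpa [MooreMachine.run] using hM.2.2 s hs
  | cons a e ih =>
    have he' : e ∈ Ot.E := Ot.suffixClosed _ he e (List.suffix_cons a e)
    obtain ⟨s', hs', hδ, hrow⟩ := hM.exists_δ_stateOf_eq s hs a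
    calc M.L (M.run (Ot.stateOf s hs) (a :: e))
        = M.L (M.run (Ot.stateOf s' hs') e) := by rw [MooreMachine.run, List.foldl_cons, hδ]; rfl
      _ = Ot.row s' ⟨e, he'⟩ := ih he' s' hs'
      _ = Ot.row (s ++ [a]) ⟨e, he'⟩ := by rw [hrow]
      _ = Ot.T (s ++ a :: e) := by simp [ObsTable.row]

end ObsTable.IsHypothesis

theorem hypothesis_states_distinguished_general {σ O : Type*}
    (Ot : ObsTable σ O)
    (M : MooreMachine σ O Ot.HQ) (hM : Ot.IsHypothesis M) :
    ∀ s₁, ∀ h₁ : s₁ ∈ Ot.S, ∀ s₂, ∀ h₂ : s₂ ∈ Ot.S, Ot.row s₁ ≠ Ot.row s₂ →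
      ∃ e ∈ Ot.E,
        M.L (M.run (Ot.stateOf s₁ h₁) e) ≠ M.L (M.run (Ot.stateOf s₂ h₂) e) := by
  intro s₁ h₁ s₂ h₂ hne
  obtain ⟨⟨e, he⟩, hdiff⟩ := Function.ne_iff.mp hne
  refine ⟨e, he, ?_⟩
  rwa [hM.L_run_stateOf he s₁ h₁, hM.L_run_stateOf he s₂ h₂]

/-- In the hypothesis machine of a closed and consistent observation table,
any two distinct states are distinguished by a suffix in `E`: for `s₁, s₂ ∈ S` with
`row(s₁) ≠ row(s₂)`, there is `e ∈ E` with `L̂(δ̂*(row(s₁), e)) ≠ L̂(δ̂*(row(s₂), e))`. -/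
theorem hypothesis_states_distinguished {σ O : Type*} [Fintype σ] [Nonempty σ]
    [Fintype O] [Nonempty O]
    (Ot : ObsTable σ O) (hclosed : Ot.Closed) (hcons : Ot.Consistent)
    (M : MooreMachine σ O Ot.HQ) (hM : Ot.IsHypothesis M) :
    ∀ s₁, ∀ h₁ : s₁ ∈ Ot.S, ∀ s₂, ∀ h₂ : s₂ ∈ Ot.S, Ot.row s₁ ≠ Ot.row s₂ →
      ∃ e ∈ Ot.E,
        M.L (M.run (Ot.stateOf s₁ h₁) e) ≠ M.L (M.run (Ot.stateOf s₂ h₂) e) :=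
  hypothesis_states_distinguished_general Ot M hM
end

section
/- Let (S, E, T) be a closed and consistent observation table over input alphabet Σ and output alphabet O, let (Q̂, q̂0, δ̂, L̂) be its hypothesis Moore machine, and let n = |Q̂| be its number of states. Then every Moore machine (Q, q0, δ, L) over (Σ, O) with at most n states that is consistent with the table is isomorphic to the hypothesis machine. -/
universe u

/-! The state a consistent machine reaches on `s ∈ S` determines `row(s)`, so sending that state
to `row(s)` is a well-defined map onto the hypothesis states. With at most `|Q̂|` states the map is
a bijection; in particular every state is reached from `S`, and through these representatives the
transitions and outputs of the machine match those of the hypothesis. -/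

theorem ObsTable.card_HQ {σ O : Type*} [DecidableEq O] (Ot : ObsTable σ O) :
    Nat.card Ot.HQ = Ot.numStates :=
  (Nat.card_congr (Equiv.subtypeEquivRight fun _ => Finset.mem_image.symm)).trans
    (Nat.card_eq_finsetCard _)

namespace MooreMachine

variable {σ O Q : Type*}

theorem run_append (M : MooreMachine σ O Q) (q : Q) (u v : List σ) :
    M.run q (u ++ v) = M.run (M.run q u) v :=
  List.foldl_append

open Classical in
/-- Off the states reached from `S` this takes the junk value `row(ε)`. -/
noncomputable def rowState (M : MooreMachine σ O Q) (Ot : ObsTable σ O) (q : Q) : Ot.HQ :=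
  if h : ∃ s ∈ Ot.S, M.run M.q0 s = q then Ot.stateOf h.choose h.choose_spec.1
  else Ot.stateOf [] Ot.nil_mem_S

namespace ConsistentWith

variable {Ot : ObsTable σ O} {M : MooreMachine σ O Q}

theorem row_eq_of_run_eq (hM : M.ConsistentWith Ot) {s₁ s₂ : List σ}
    (h₁ : Ot.InTableRows s₁) (h₂ : Ot.InTableRows s₂) (h : M.run M.q0 s₁ = M.run M.q0 s₂) :
    Ot.row s₁ = Ot.row s₂ := by
  funext e
  change Ot.T (s₁ ++ e.1) = Ot.T (s₂ ++ e.1)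
  rw [← hM s₁ h₁ e.1 e.2, ← hM s₂ h₂ e.1 e.2, run_append, run_append, h]

theorem rowState_run (hM : M.ConsistentWith Ot) {s : List σ} (hs : s ∈ Ot.S) :
    M.rowState Ot (M.run M.q0 s) = Ot.stateOf s hs := by
  have h : ∃ t ∈ Ot.S, M.run M.q0 t = M.run M.q0 s := ⟨s, hs, rfl⟩
  rw [rowState, dif_pos h]
  exact Subtype.ext (hM.row_eq_of_run_eq (.inl h.choose_spec.1) (.inl hs) h.choose_spec.2)

theorem rowState_surjective (hM : M.ConsistentWith Ot) : Function.Surjective (M.rowState Ot) := by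
  rintro ⟨_, s, hs, rfl⟩
  exact ⟨M.run M.q0 s, hM.rowState_run hs⟩

theorem rowState_bijective [DecidableEq O] [Finite Q] (hM : M.ConsistentWith Ot)
    (hcard : Nat.card Q ≤ Ot.numStates) : Function.Bijective (M.rowState Ot) :=
  hM.rowState_surjective.bijective_of_nat_card_le (hcard.trans_eq Ot.card_HQ.symm)

theorem exists_mem_S_run_eq (hM : M.ConsistentWith Ot)
    (hinj : Function.Injective (M.rowState Ot)) (q : Q) : ∃ s ∈ Ot.S, M.run M.q0 s = q := by
  obtain ⟨s, hs, hrow⟩ := (M.rowState Ot q).2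
  exact ⟨s, hs, hinj (by rw [hM.rowState_run hs]; exact Subtype.ext hrow)⟩

end ConsistentWith

end MooreMachine

theorem consistent_machine_iso_hypothesis_general {σ O : Type*} [DecidableEq O]
    (Ot : ObsTable σ O)
    (M : MooreMachine σ O Ot.HQ) (hM : Ot.IsHypothesis M)
    {Q : Type u} [Fintype Q] (M' : MooreMachine σ O Q)
    (hcard : Fintype.card Q ≤ Ot.numStates) (hM' : M'.ConsistentWith Ot) :
    ∃ φ : Q → Ot.HQ, MooreIso M' M φ := by
  obtain ⟨hq0, hδ, hL⟩ := hM
  have hbij := hM'.rowState_bijective (Nat.card_eq_fintype_card.trans_le hcard)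
  have hreach := hM'.exists_mem_S_run_eq hbij.1
  refine ⟨M'.rowState Ot, hbij, ?_, ?_, ?_⟩
  · rw [hq0, ← hM'.rowState_run Ot.nil_mem_S]
    rfl
  · intro q a
    obtain ⟨s, hs, rfl⟩ := hreach q
    obtain ⟨t, ht, hta⟩ := hreach (M'.δ (M'.run M'.q0 s) a)
    rw [hM'.rowState_run hs, ← hta, hM'.rowState_run ht]
    refine Subtype.ext (.trans ?_ (hδ s hs a).symm)
    exact hM'.row_eq_of_run_eq (.inl ht) (.inr ⟨s, hs, a, rfl⟩)
      (by rw [hta, M'.run_append]; rfl)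
  · intro q
    obtain ⟨s, hs, rfl⟩ := hreach q
    rw [hM'.rowState_run hs, hL s hs, ← s.append_nil, hM' s (.inl hs) [] Ot.nil_mem_E]

/-- Every Moore machine with at most `n = |Q̂|` states that is consistent with
a closed and consistent observation table is isomorphic to the hypothesis machine. -/
theorem consistent_machine_iso_hypothesis {σ O : Type*} [Fintype σ] [Nonempty σ]
    [Fintype O] [Nonempty O] [DecidableEq O]
    (Ot : ObsTable σ O) (hclosed : Ot.Closed) (hcons : Ot.Consistent)
    (M : MooreMachine σ O Ot.HQ) (hM : Ot.IsHypothesis M)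
    {Q : Type u} [Fintype Q] (M' : MooreMachine σ O Q)
    (hcard : Fintype.card Q ≤ Ot.numStates) (hM' : M'.ConsistentWith Ot) :
    ∃ φ : Q → Ot.HQ, MooreIso M' M φ :=
  consistent_machine_iso_hypothesis_general Ot M hM M' hcard hM'
end
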